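/- Let S be a finitely generated submonoid of ℕ^d and let a ∈ F(S) be a Frobenius element of S with 2a ∈ S. If PF(S) ≠ {a}, then S ∪ {a} is a submonoid of ℕ^d and PF(S ∪ {a}) ≠ ∅. -/

import Mathlib

open scoped BigOperators

/-- The natural cast of an element of `ℕ^d` into `ℚ^d`. -/
def toQ {d : ℕ} (x : Fin d → ℕ) : Fin d → ℚ := fun i => (x i : ℚ)

/-- The natural cast of an element of `ℕ^d` into `ℤ^d`. -/
def natToZ {d : ℕ} (x : Fin d → ℕ) : Fin d → ℤ := fun i => (x i : ℤ)

/-- The cone `pos(S)` of a submonoid `S ⊆ ℕ^d`: all nonnegative rational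
combinations of elements of `S`, as a subset of `ℚ^d`. -/
def posCone {d : ℕ} (S : AddSubmonoid (Fin d → ℕ)) : Set (Fin d → ℚ) :=
  {q | ∃ (k : ℕ) (c : Fin k → ℚ) (s : Fin k → (Fin d → ℕ)),
    (∀ i, 0 ≤ c i) ∧ (∀ i, s i ∈ S) ∧ q = ∑ i, c i • toQ (s i)}

/-- The gap set `H(S) = (pos(S) \ S) ∩ ℕ^d`. -/
def gaps {d : ℕ} (S : AddSubmonoid (Fin d → ℕ)) : Set (Fin d → ℕ) :=
  {x | toQ x ∈ posCone S ∧ x ∉ S}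

/-- The set of pseudo-Frobenius elements of `S`. -/
def PF {d : ℕ} (S : AddSubmonoid (Fin d → ℕ)) : Set (Fin d → ℕ) :=
  {a | a ∈ gaps S ∧ ∀ s ∈ S, s ≠ 0 → a + s ∈ S}

/-- A term order on `ℕ^d`: a total order compatible with addition for which
`0` is the least element. -/
def IsTermOrder {d : ℕ} (r : (Fin d → ℕ) → (Fin d → ℕ) → Prop) : Prop :=
  (∀ a b, r a b ∨ r b a) ∧ (∀ a b, r a b → r b a → a = b) ∧
    (∀ a b c, r a b → r b c → r a c) ∧ (∀ a, r 0 a) ∧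
    (∀ a b c, r a b → r (a + c) (b + c))

/-- The set of Frobenius elements of `S`: maxima of `H(S)` for some term order. -/
def FrobSet {d : ℕ} (S : AddSubmonoid (Fin d → ℕ)) : Set (Fin d → ℕ) :=
  {f | f ∈ gaps S ∧ ∃ r, IsTermOrder r ∧ ∀ h ∈ gaps S, r h f}

/-- The Apéry set of `S` relative to `b`:
`Ap(S,b) = {a ∈ S : a - b ∈ pos(S) \ S}`, the difference taken in `ℚ^d`. -/
def Apery {d : ℕ} (S : AddSubmonoid (Fin d → ℕ)) (b : Fin d → ℕ) : Set (Fin d → ℕ) :=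
  {a | a ∈ S ∧ (toQ a - toQ b) ∈ posCone S ∧ ¬ ∃ s ∈ S, toQ s = toQ a - toQ b}

/-- The partial order `≼_S`: `x ≼_S y` iff `y - x ∈ S`. -/
def leS {d : ℕ} (S : AddSubmonoid (Fin d → ℕ)) (x y : Fin d → ℕ) : Prop :=
  ∃ s ∈ S, x + s = y

/-- `a` is a `≼_S`-maximal element of `X`. -/
def MaximalIn {d : ℕ} (S : AddSubmonoid (Fin d → ℕ)) (X : Set (Fin d → ℕ))
    (a : Fin d → ℕ) : Prop :=
  a ∈ X ∧ ∀ a' ∈ X, a' ≠ a → ¬ leS S a a'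

/-- `S` is irreducible: it is not the intersection of two submonoids of `ℕ^d`
each properly containing it. -/
def IrreducibleMonoid {d : ℕ} (S : AddSubmonoid (Fin d → ℕ)) : Prop :=
  ¬ ∃ S₁ S₂ : AddSubmonoid (Fin d → ℕ), S < S₁ ∧ S < S₂ ∧
    (S : Set (Fin d → ℕ)) = (S₁ : Set (Fin d → ℕ)) ∩ (S₂ : Set (Fin d → ℕ))

/-- The multiplicity of `S`: componentwise infimum of `S \ {0}`. -/
noncomputable def mult {d : ℕ} (S : AddSubmonoid (Fin d → ℕ)) : Fin d → ℕ :=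
  fun i => sInf {n | ∃ s ∈ S, s ≠ 0 ∧ s i = n}

/-- `S` is a PI-monoid: `S = (a + T) ∪ {0}` for some submonoid `T` of `ℕ^d`
and some `a ∈ T \ {0}`. -/
def IsPIMonoid {d : ℕ} (S : AddSubmonoid (Fin d → ℕ)) : Prop :=
  ∃ (T : AddSubmonoid (Fin d → ℕ)) (a : Fin d → ℕ), a ∈ T ∧ a ≠ 0 ∧
    (S : Set (Fin d → ℕ)) = {x | ∃ t ∈ T, x = a + t} ∪ {0}

/-- `G` is a minimal system of generators of `S`. -/
def IsMinimalGenSet {d : ℕ} (S : AddSubmonoid (Fin d → ℕ)) (G : Set (Fin d → ℕ)) : Prop :=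
  AddSubmonoid.closure G = S ∧ ∀ G' ⊂ G, AddSubmonoid.closure G' ≠ S

/-!
A Frobenius element `a` is maximal among the gaps for a term order `≼`, and `a ≼ a + x` for
every `x`. Hence `a + x` is never a gap when `x ≠ 0` lies in the cone, so `a + x ∈ S`. Taking
`x ∈ S` shows that `a` is pseudo-Frobenius, which together with `2a ∈ S` makes `S ∪ {a}` a
monoid; taking `x = b` for a second pseudo-Frobenius element `b` gives `b + a ∈ S`, which is
what keeps `b` pseudo-Frobenius in `S ∪ {a}`.
-/

section

variable {d : ℕ} {S : AddSubmonoid (Fin d → ℕ)}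

lemma toQ_add (x y : Fin d → ℕ) : toQ (x + y) = toQ x + toQ y := by
  funext i
  simp [toQ]

lemma toQ_mem_posCone {s : Fin d → ℕ} (hs : s ∈ S) : toQ s ∈ posCone S :=
  ⟨1, fun _ => 1, fun _ => s, fun _ => zero_le_one, fun _ => hs, by simp⟩

lemma posCone_mono {T : AddSubmonoid (Fin d → ℕ)} (h : S ≤ T) : posCone S ⊆ posCone T := by
  rintro q ⟨k, c, s, hc, hs, rfl⟩
  exact ⟨k, c, s, hc, fun i => h (hs i), rfl⟩

lemma add_mem_posCone {p q : Fin d → ℚ} (hp : p ∈ posCone S) (hq : q ∈ posCone S) :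
    p + q ∈ posCone S := by
  obtain ⟨k, c, s, hc, hs, rfl⟩ := hp
  obtain ⟨l, c', s', hc', hs', rfl⟩ := hq
  refine ⟨k + l, Fin.append c c', Fin.append s s', ?_, ?_, by simp [Fin.sum_univ_add]⟩
  · exact Fin.addCases (fun i => by simpa using hc i) (fun i => by simpa using hc' i)
  · exact Fin.addCases (fun i => by simpa using hs i) (fun i => by simpa using hs' i)

lemma ne_zero_of_mem_gaps {x : Fin d → ℕ} (hx : x ∈ gaps S) : x ≠ 0 :=
  fun h => hx.2 (h ▸ S.zero_mem)

lemma IsTermOrder.le_add_right {r : (Fin d → ℕ) → (Fin d → ℕ) → Prop} (hr : IsTermOrder r)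
    (a x : Fin d → ℕ) : r a (a + x) := by
  obtain ⟨-, -, -, hzero, hadd⟩ := hr
  simpa [add_comm] using hadd 0 x a (hzero x)

lemma add_mem_of_mem_FrobSet {a x : Fin d → ℕ} (ha : a ∈ FrobSet S)
    (hx : toQ x ∈ posCone S) (hx0 : x ≠ 0) : a + x ∈ S := by
  obtain ⟨⟨haPos, -⟩, r, hr, hmax⟩ := ha
  by_contra hax
  have hgap : a + x ∈ gaps S := ⟨by rw [toQ_add]; exact add_mem_posCone haPos hx, hax⟩
  exact hx0 (add_eq_left.mp (hr.2.1 _ _ (hmax _ hgap) (hr.le_add_right a x)))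

lemma FrobSet_subset_PF : FrobSet S ⊆ PF S :=
  fun _ ha => ⟨ha.1, fun _ hs hs0 => add_mem_of_mem_FrobSet ha (toQ_mem_posCone hs) hs0⟩

def unionPF (S : AddSubmonoid (Fin d → ℕ)) {a : Fin d → ℕ} (ha : a ∈ PF S) (h2a : a + a ∈ S) :
    AddSubmonoid (Fin d → ℕ) where
  carrier := (S : Set (Fin d → ℕ)) ∪ {a}
  zero_mem' := Or.inl S.zero_mem
  add_mem' := by
    have hadd : ∀ s ∈ S, a + s ∈ (S : Set (Fin d → ℕ)) ∪ {a} := fun s hs => by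
      by_cases hs0 : s = 0
      · simp [hs0]
      · exact Or.inl (ha.2 s hs hs0)
    rintro x y (hx | rfl) (hy | rfl)
    · exact Or.inl (S.add_mem hx hy)
    · rw [add_comm]; exact hadd x hx
    · exact hadd y hy
    · exact Or.inl h2a

lemma mem_PF_unionPF {a b : Fin d → ℕ} (ha : a ∈ PF S) (h2a : a + a ∈ S) (hb : b ∈ PF S)
    (hba : b ≠ a) (hbaS : b + a ∈ S) : b ∈ PF (unionPF S ha h2a) := by
  obtain ⟨⟨hbPos, hbS⟩, hbS'⟩ := hb
  refine ⟨⟨posCone_mono (fun x hx => Or.inl hx) hbPos, ?_⟩, ?_⟩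
  · rintro (h | h)
    exacts [hbS h, hba h]
  · rintro s (hs | rfl) hs0
    exacts [Or.inl (hbS' s hs hs0), Or.inl hbaS]

end

theorem union_frobenius_mpd_general {d : ℕ} (S : AddSubmonoid (Fin d → ℕ))
    (a : Fin d → ℕ) (ha : a ∈ FrobSet S) (h2a : a + a ∈ S)
    (hpf : PF S ≠ {a}) :
    ∃ S' : AddSubmonoid (Fin d → ℕ),
      (S' : Set (Fin d → ℕ)) = (S : Set (Fin d → ℕ)) ∪ {a} ∧
        (PF S').Nonempty := by
  have haPF : a ∈ PF S := FrobSet_subset_PF ha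
  obtain ⟨b, hb, hba⟩ : ∃ b ∈ PF S, b ≠ a := by
    by_contra! h
    exact hpf (Set.eq_singleton_iff_unique_mem.2 ⟨haPF, h⟩)
  have hbaS : b + a ∈ S := by
    rw [add_comm]
    exact add_mem_of_mem_FrobSet ha hb.1.1 (ne_zero_of_mem_gaps hb.1)
  exact ⟨unionPF S haPF h2a, rfl, b, mem_PF_unionPF haPF h2a hb hba hbaS⟩

/-- If `a` is a Frobenius element of a finitely generated `S`
with `2a ∈ S` and `PF(S) ≠ {a}`, then `S ∪ {a}` is a submonoid with nonempty
pseudo-Frobenius set (i.e. an MPD-semigroup). -/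
theorem union_frobenius_mpd {d : ℕ} (S : AddSubmonoid (Fin d → ℕ)) (hfg : S.FG)
    (a : Fin d → ℕ) (ha : a ∈ FrobSet S) (h2a : a + a ∈ S)
    (hpf : PF S ≠ {a}) :
    ∃ S' : AddSubmonoid (Fin d → ℕ),
      (S' : Set (Fin d → ℕ)) = (S : Set (Fin d → ℕ)) ∪ {a} ∧
        (PF S').Nonempty :=
  union_frobenius_mpd_general S a ha h2a hpf
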